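/- arXiv:2504.14333 — 2 statements merged into one kernel-verified Lean document; each statement's English description precedes it below -/
import Mathlib

section
/- Let ν ∈ (0,1), ζ ≥ 1 an integer, {r_k} a nonnegative sequence, and {ς_k} nonnegative with ς_k → 0. If r_{k+1} ≤ ν · max_{max(1, k-ζ+1) ≤ j ≤ k} r_j + ς_k for all k ≥ K₀, then r_k → 0. -/
/-- Nonmonotone decrease with vanishing perturbation: if
`r (k+1) ≤ ν · max_{max(1,k-ζ+1) ≤ j ≤ k} r j + ς k` for all `k ≥ K₀` with
`ν ∈ (0,1)` and `ς k → 0`, then `r k → 0`. -/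
theorem stmt_8 (ν : ℝ) (hν : 0 < ν ∧ ν < 1) (ζ K₀ : ℕ) (hζ : 1 ≤ ζ)
    (r ς : ℕ → ℝ) (hr : ∀ k, 0 ≤ r k) (hςpos : ∀ k, 0 ≤ ς k)
    (hς : Filter.Tendsto ς Filter.atTop (nhds 0))
    (hrec : ∀ k, K₀ ≤ k → ∀ hk : 1 ≤ k,
      r (k + 1) ≤ ν * (Finset.Icc (max 1 (k + 1 - ζ)) k).sup'
        (by rw [Finset.nonempty_Icc]; omega) r + ς k) :
    Filter.Tendsto r Filter.atTop (nhds 0) := by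
  obtain ⟨hν0, hν1⟩ := hν
  set M : ℕ → ℝ := fun k =>
    (insert k (Finset.Icc (max 1 (k + 1 - ζ)) k)).sup' (Finset.insert_nonempty _ _) r with hMdef
  have hrM : ∀ k, r k ≤ M k := fun k => Finset.le_sup' r (Finset.mem_insert_self _ _)
  have hM0 : ∀ k, 0 ≤ M k := fun k => (hr k).trans (hrM k)
  have hmem : ∀ k j, max 1 (k + 1 - ζ) ≤ j → j ≤ k → r j ≤ M k := by
    intro k j h1 h2
    exact Finset.le_sup' r (Finset.mem_insert_of_mem (Finset.mem_Icc.2 ⟨h1, h2⟩))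
  have hrec' : ∀ k, max 1 K₀ ≤ k → r (k + 1) ≤ ν * M k + ς k := by
    intro k hk
    have h1 : (1 : ℕ) ≤ k := le_trans (le_max_left _ _) hk
    have hK : K₀ ≤ k := le_trans (le_max_right _ _) hk
    refine (hrec k hK h1).trans (add_le_add_left ?_ _)
    refine mul_le_mul_of_nonneg_left ?_ hν0.le
    apply Finset.sup'_le
    intro j hj
    obtain ⟨h1j, h2j⟩ := Finset.mem_Icc.1 hj
    exact hmem k j h1j h2j
  have hstep : ∀ k, M (k + 1) ≤ max (M k) (r (k + 1)) := by
    intro k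
    apply Finset.sup'_le
    intro j hj
    rcases Finset.mem_insert.1 hj with h | h
    · subst h; exact le_max_right _ _
    · obtain ⟨h1, h2⟩ := Finset.mem_Icc.1 h
      rcases Nat.lt_or_ge j (k + 1) with hlt | hge
      · exact le_trans (hmem k j (by omega) (by omega)) (le_max_left _ _)
      · have hj' : j = k + 1 := by omega
        subst hj'; exact le_max_right _ _
  -- key ε-step
  have key : ∀ ε : ℝ, 0 < ε → ∃ N, ∀ j, N ≤ j → r j ≤ 2 * ε := by
    intro ε hε
    have hδ : 0 < (1 - ν) * ε := mul_pos (by linarith) hε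
    obtain ⟨K₁, hK₁⟩ := (Metric.tendsto_atTop.1 hς) ((1 - ν) * ε) hδ
    have hςK : ∀ k, K₁ ≤ k → ς k ≤ (1 - ν) * ε := by
      intro k hk
      have := hK₁ k hk
      rw [Real.dist_eq, sub_zero] at this
      exact (le_abs_self _).trans this.le
    obtain ⟨K, hK1, hKK₁⟩ : ∃ K, max 1 K₀ ≤ K ∧ K₁ ≤ K :=
      ⟨max (max 1 K₀) K₁, le_max_left _ _, le_max_right _ _⟩
    have hA : ∀ n k, K ≤ k → M (k + n) ≤ max (M k) ε := by
      intro n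
      induction n with
      | zero => intro k hk; simpa using le_max_left (M k) ε
      | succ n ih =>
        intro k hk
        have h4 : M (k + n) ≤ max (M k) ε := ih k hk
        have h2 : r (k + n + 1) ≤ ν * M (k + n) + ς (k + n) :=
          hrec' (k + n) (le_trans hK1 (hk.trans (Nat.le_add_right _ _)))
        have h3 : ς (k + n) ≤ (1 - ν) * ε :=
          hςK _ (le_trans hKK₁ (hk.trans (Nat.le_add_right _ _)))
        have h6 : ν * max (M k) ε + (1 - ν) * ε ≤ max (M k) ε := by
          have hε' : ε ≤ max (M k) ε := le_max_right _ _
          nlinarith [le_max_left (M k) ε]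
        have h5 : r (k + n + 1) ≤ max (M k) ε := by
          refine le_trans h2 (le_trans ?_ h6)
          exact add_le_add (mul_le_mul_of_nonneg_left h4 hν0.le) h3
        show M (k + n + 1) ≤ max (M k) ε
        exact (hstep (k + n)).trans (max_le h4 h5)
    have hB : ∀ k, K ≤ k → M (k + ζ) ≤ ν * max (M k) ε + (1 - ν) * ε := by
      intro k hk
      have hk1 : (1 : ℕ) ≤ k := le_trans (le_trans (le_max_left _ _) hK1) hk
      apply Finset.sup'_le
      intro j hj
      have hjmem : k + 1 ≤ j ∧ j ≤ k + ζ := by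
        rcases Finset.mem_insert.1 hj with h | h
        · subst h; omega
        · have := Finset.mem_Icc.1 h; omega
      obtain ⟨hj1, hj2⟩ := hjmem
      obtain ⟨m, rfl⟩ : ∃ m, j = k + m + 1 := ⟨j - k - 1, by omega⟩
      have h2 : r (k + m + 1) ≤ ν * M (k + m) + ς (k + m) :=
        hrec' (k + m) (le_trans hK1 (hk.trans (Nat.le_add_right _ _)))
      have h3 : M (k + m) ≤ max (M k) ε := hA m k hk
      have h4 : ς (k + m) ≤ (1 - ν) * ε :=
        hςK _ (le_trans hKK₁ (hk.trans (Nat.le_add_right _ _)))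
      exact h2.trans (add_le_add (mul_le_mul_of_nonneg_left h3 hν0.le) h4)
    have hmax0 : 0 ≤ max (M K) ε := le_trans hε.le (le_max_right _ _)
    have hC : ∀ n, M (K + n * ζ) ≤ ν ^ n * max (M K) ε + ε := by
      intro n
      induction n with
      | zero =>
        simpa using le_trans (le_max_left (M K) ε) (by linarith [le_max_left (M K) ε])
      | succ n ih =>
        have heq : K + (n + 1) * ζ = (K + n * ζ) + ζ := by ring
        rw [heq]
        have h1 := hB (K + n * ζ) (Nat.le_add_right _ _)
        have h2 : max (M (K + n * ζ)) ε ≤ ν ^ n * max (M K) ε + ε := by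
          refine max_le ih ?_
          have : 0 ≤ ν ^ n * max (M K) ε := mul_nonneg (pow_nonneg hν0.le n) hmax0
          linarith
        calc M ((K + n * ζ) + ζ) ≤ ν * max (M (K + n * ζ)) ε + (1 - ν) * ε := h1
          _ ≤ ν * (ν ^ n * max (M K) ε + ε) + (1 - ν) * ε :=
              add_le_add (mul_le_mul_of_nonneg_left h2 hν0.le) le_rfl
          _ = ν ^ (n + 1) * max (M K) ε + ε := by ring
    -- pick n with ν^n * max (M K) ε < ε
    have hmaxpos : 0 < max (M K) ε := lt_of_lt_of_le hε (le_max_right _ _)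
    obtain ⟨n, hn⟩ := exists_pow_lt_of_lt_one (div_pos hε hmaxpos) hν1
    have hνn : ν ^ n * max (M K) ε ≤ ε := ((lt_div_iff₀ hmaxpos).1 hn).le
    refine ⟨K + n * ζ, fun j hj => ?_⟩
    have hMN : M (K + n * ζ) ≤ 2 * ε := by
      have := hC n; linarith
    have : r j ≤ max (M (K + n * ζ)) ε := by
      have hj' : j = (K + n * ζ) + (j - (K + n * ζ)) := by omega
      rw [hj']
      exact le_trans (hrM _) (hA _ _ (Nat.le_add_right _ _))
    exact this.trans (max_le hMN (by linarith))
  rw [Metric.tendsto_atTop]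
  intro ε0 hε0
  obtain ⟨N, hN⟩ := key (ε0 / 3) (by linarith)
  refine ⟨N, fun n hn => ?_⟩
  rw [Real.dist_eq, sub_zero, abs_of_nonneg (hr n)]
  have := hN n hn
  linarith
end

section
/- Let T be nonexpansive on a real Hilbert space with fixed point w*, F := I - T, λ ∈ (0,1], and w⁺ = w - λF(w) + λe. Then ‖w⁺ - w*‖² ≤ ‖w - w*‖² - λ(1-λ)‖F(w)‖² + 2λ‖w - w*‖‖e‖ + λ²‖e‖² + 2λ(1-λ)‖F(w)‖‖e‖. -/
/-- One-step inexact Krasnoselskii–Mann descent estimate: with `T` nonexpansive,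
`T w* = w*`, `F = I - T`, `λ ∈ (0,1]`, and `w⁺ = w - λ F(w) + λ e`:
`‖w⁺ - w*‖² ≤ ‖w - w*‖² - λ(1-λ)‖F w‖² + 2λ‖w - w*‖‖e‖ + λ²‖e‖² + 2λ(1-λ)‖F w‖‖e‖`. -/
theorem stmt_19 {H : Type*} [NormedAddCommGroup H] [InnerProductSpace ℝ H]
    [CompleteSpace H] (T : H → H) (hT : ∀ x y, ‖T x - T y‖ ≤ ‖x - y‖)
    (wstar : H) (hfix : T wstar = wstar)
    (F : H → H) (hF : ∀ x, F x = x - T x)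
    (lam : ℝ) (hlam : 0 < lam ∧ lam ≤ 1)
    (w e wplus : H) (hstep : wplus = w - lam • F w + lam • e) :
    ‖wplus - wstar‖ ^ 2 ≤ ‖w - wstar‖ ^ 2 - lam * (1 - lam) * ‖F w‖ ^ 2
      + 2 * lam * ‖w - wstar‖ * ‖e‖ + lam ^ 2 * ‖e‖ ^ 2
      + 2 * lam * (1 - lam) * ‖F w‖ * ‖e‖ := by
  obtain ⟨hl0, hl1⟩ := hlam
  set a : H := w - wstar with ha
  set f : H := F w with hf
  -- T w - wstar = a - f
  have hTw : T w - wstar = a - f := by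
    rw [ha, hf, hF]; rw [← hfix]; abel
  -- nonexpansiveness at w, wstar
  have hne : ‖a - f‖ ≤ ‖a‖ := by
    rw [← hTw, ha]
    simpa [hfix] using hT w wstar
  have hne2 : ‖a - f‖ ^ 2 ≤ ‖a‖ ^ 2 := by
    have := norm_nonneg (a - f)
    nlinarith
  have hexp : ‖a - f‖ ^ 2 = ‖a‖ ^ 2 - 2 * inner ℝ a f + ‖f‖ ^ 2 := by
    rw [← real_inner_self_eq_norm_sq, ← real_inner_self_eq_norm_sq,
      ← real_inner_self_eq_norm_sq, inner_sub_sub_self, real_inner_comm f a]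
    ring
  have hfirm : ‖f‖ ^ 2 ≤ 2 * inner ℝ a f := by nlinarith
  -- decompose wplus - wstar
  have hdec : wplus - wstar = (a - lam • f) + lam • e := by
    rw [hstep, ha, hf]; abel
  have hmain : ‖wplus - wstar‖ ^ 2 = ‖a - lam • f‖ ^ 2
      + 2 * lam * inner ℝ (a - lam • f) e + lam ^ 2 * ‖e‖ ^ 2 := by
    rw [hdec, ← real_inner_self_eq_norm_sq, ← real_inner_self_eq_norm_sq,
      ← real_inner_self_eq_norm_sq, inner_add_add_self]
    simp only [real_inner_smul_left, real_inner_smul_right]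
    rw [real_inner_comm e (a - lam • f)]
    ring
  have hsq : ‖a - lam • f‖ ^ 2 = ‖a‖ ^ 2 - 2 * lam * inner ℝ a f + lam ^ 2 * ‖f‖ ^ 2 := by
    rw [← real_inner_self_eq_norm_sq, ← real_inner_self_eq_norm_sq,
      ← real_inner_self_eq_norm_sq, inner_sub_sub_self]
    simp only [real_inner_smul_left, real_inner_smul_right]
    rw [real_inner_comm f a]
    ring
  have hsq' : ‖a - lam • f‖ ^ 2 ≤ ‖a‖ ^ 2 - lam * (1 - lam) * ‖f‖ ^ 2 := by
    rw [hsq]; nlinarith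
  -- cross term bound via convexity
  have hcross : inner ℝ (a - lam • f) e ≤ ‖a‖ * ‖e‖ := by
    have h1 : a - lam • f = (1 - lam) • a + lam • (a - f) := by
      module
    rw [h1, inner_add_left, real_inner_smul_left, real_inner_smul_left]
    have c1 : (inner ℝ a e : ℝ) ≤ ‖a‖ * ‖e‖ := real_inner_le_norm a e
    have c2 : (inner ℝ (a - f) e : ℝ) ≤ ‖a - f‖ * ‖e‖ := real_inner_le_norm _ e
    have c3 : ‖a - f‖ * ‖e‖ ≤ ‖a‖ * ‖e‖ :=
      mul_le_mul_of_nonneg_right hne (norm_nonneg e)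
    nlinarith
  have hpos : 0 ≤ 2 * lam * (1 - lam) * ‖f‖ * ‖e‖ :=
    mul_nonneg (mul_nonneg (mul_nonneg (by linarith) (by linarith)) (norm_nonneg f))
      (norm_nonneg e)
  rw [hmain]
  nlinarith [mul_le_mul_of_nonneg_left hcross (by positivity : (0:ℝ) ≤ 2 * lam)]
end
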